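/- Let K be a finite nonempty set of control states, D a nonempty set of data states, δ : K → K → Set (D × D) a transition matrix of binary relations on D, and S, H ∈ K distinguished start and halt states. Define the one-step relation Step on K × D by Step (k₀, d₀) (k₁, d₁) ↔ (d₀, d₁) ∈ δ k₀ k₁. The relation computed by the DSM is {(d, d') ∈ D × D | Relation.ReflTransGen Step (S, d) (H, d')}. Then this computed relation equals ⋃_{n ∈ ℕ} (δⁿ)[S, H], where δⁿ is the n-th matrix power of δ under the relation-matrix product (M;N)[i,k] = ⋃_{j∈K} M[i,j];N[j,k] and δ⁰ is the identity matrix. -/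
import Mathlib


/-- Composition of binary relations given as subsets of `D × D`. -/
def rcomp {D : Type*} (R S : Set (D × D)) : Set (D × D) :=
  {p | ∃ b, (p.1, b) ∈ R ∧ (b, p.2) ∈ S}

/-- Product of matrices of binary relations: `(M;N)[i,k] = ⋃ j, M[i,j];N[j,k]`. -/
def matMul {K D : Type*} (M N : K → K → Set (D × D)) : K → K → Set (D × D) :=
  fun i k => ⋃ j, rcomp (M i j) (N j k)

/-- The identity matrix: identity relation on the diagonal, empty elsewhere. -/
def idMat (K D : Type*) [DecidableEq K] : K → K → Set (D × D) :=
  fun i k => if i = k then {p | p.1 = p.2} else ∅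

/-- Powers of a matrix of binary relations. -/
def matPow {K D : Type*} [DecidableEq K] (M : K → K → Set (D × D)) :
    ℕ → K → K → Set (D × D)
  | 0 => idMat K D
  | n + 1 => matMul (matPow M n) M

/-- One-step relation of a DSM with transition matrix `δ` on configurations
`(k, d) : K × D`. -/
def dsmStep {K D : Type*} (δ : K → K → Set (D × D)) : K × D → K × D → Prop :=
  fun c c' => (c.2, c'.2) ∈ δ c.1 c'.1

theorem dsm_computed_relation_eq_union_matrix_powers {K D : Type*} [Fintype K]
    [DecidableEq K] [Nonempty K] [Nonempty D] (δ : K → K → Set (D × D))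
    (S H : K) :
    {p : D × D | Relation.ReflTransGen (dsmStep δ) (S, p.1) (H, p.2)} =
      ⋃ n : ℕ, matPow δ n S H := by
  ext p
  obtain ⟨d, d'⟩ := p
  simp only [Set.mem_setOf_eq, Set.mem_iUnion]
  constructor
  · intro h
    generalize hc : (H, d') = c at h
    induction h generalizing H d' with
    | refl =>
      obtain ⟨rfl, rfl⟩ := Prod.mk.injEq .. ▸ hc.symm
      exact ⟨0, by simp [matPow, idMat]⟩
    | tail _ hstep ih =>
      rename_i b c _
      subst hc
      obtain ⟨n, hn⟩ := ih b.1 b.2 rfl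
      exact ⟨n + 1, Set.mem_iUnion.2 ⟨b.1, b.2, hn, hstep⟩⟩
  · rintro ⟨n, hn⟩
    induction n generalizing H d' with
    | zero =>
      simp only [matPow, idMat] at hn
      by_cases hSH : S = H
      · subst hSH; simp at hn; subst hn; exact .refl
      · simp [hSH] at hn
    | succ n ih =>
      obtain ⟨j, b, hb, hstep⟩ := Set.mem_iUnion.1 hn
      exact (ih j b hb).tail hstep
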